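/- Let γ > 0 and let φ : [0,∞) → ℝ be strictly increasing on [0,∞) such that ψ(z) = φ(e^z) is strictly convex on ℝ. Then for g, f ∈ F_γ, D_{φ,γ}(g,f) = 0 holds if and only if g = f ν-almost everywhere. -/

import Mathlib

open MeasureTheory

/-- `⟨g^{1+γ}⟩`, `⟨g f^γ⟩`, `⟨f^{1+γ}⟩`-based functional density power divergence. -/
noncomputable def FDPD {X : Type*} [MeasurableSpace X] (ν : Measure X)
    (φ : ℝ → ℝ) (γ : ℝ) (g f : X → NNReal) : ℝ :=
  (1 / γ) * φ (∫⁻ x, (g x : ENNReal) ^ (1 + γ) ∂ν).toReal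
    - ((1 + γ) / γ) * φ (∫⁻ x, (g x : ENNReal) * (f x : ENNReal) ^ γ ∂ν).toReal
    + φ (∫⁻ x, (f x : ENNReal) ^ (1 + γ) ∂ν).toReal

/-- Membership in the class `F_γ`: measurable, not a.e. zero, with `⟨g^{1+γ}⟩ < ∞`. -/
def MemF {X : Type*} [MeasurableSpace X] (ν : Measure X) (γ : ℝ) (g : X → NNReal) : Prop :=
  Measurable g ∧ ¬ (g =ᵐ[ν] 0) ∧ (∫⁻ x, (g x : ENNReal) ^ (1 + γ) ∂ν) ≠ ⊤

/-!
Write `A = ⟨g^{1+γ}⟩`, `B = ⟨g f^γ⟩`, `C = ⟨f^{1+γ}⟩`, `a = 1/(1+γ)`, `b = γ/(1+γ)`. Then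
`D_{φ,γ}(g,f) = (1+γ)/γ · (a φ(A) + b φ(C) - φ(B))`, and Hölder's inequality gives
`B ≤ A^a C^b = exp (a log A + b log C)`. Monotonicity of `φ` and convexity of `ψ` make the gap
nonnegative; if it vanishes, strict convexity forces `A = C` and strict monotonicity `B = A`.
Then the pointwise Young inequality `g f^γ ≤ a g^{1+γ} + b f^{1+γ}` integrates to an equality,
so it holds with equality a.e., which means `g = f` a.e.
-/

open Real Set
open scoped NNReal ENNReal

lemma Real.holderConjugate_one_add_div {γ : ℝ} (hγ : 0 < γ) :
    (1 + γ).HolderConjugate ((1 + γ) / γ) :=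
  Real.holderConjugate_iff.mpr ⟨by linarith, by field_simp⟩

theorem eq_of_apply_eq_weighted_of_le_geom_mean {φ : ℝ → ℝ} {a b A B C : ℝ}
    (hφ : StrictMonoOn φ (Ici 0)) (hψ : StrictConvexOn ℝ univ (fun z => φ (exp z)))
    (ha : 0 < a) (hb : 0 < b) (hab : a + b = 1) (hA : 0 < A) (hC : 0 < C) (hB : 0 ≤ B)
    (hle : B ≤ A ^ a * C ^ b) (heq : φ B = a * φ A + b * φ C) : A = C ∧ B = A := by
  have hAC : A = C := by
    by_contra hne
    have hlog : log A ≠ log C := fun h => hne (log_injOn_pos hA hC h)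
    have hconv := hψ.2 (mem_univ _) (mem_univ _) hlog ha hb hab
    have hmean : A ^ a * C ^ b = exp (a • log A + b • log C) := by
      rw [smul_eq_mul, smul_eq_mul, exp_add, rpow_def_of_pos hA, rpow_def_of_pos hC]
      ring_nf
    simp only [smul_eq_mul, exp_log hA, exp_log hC] at hconv hmean
    have hφB : φ B ≤ φ (A ^ a * C ^ b) := hφ.monotoneOn hB (mem_Ici.2 (by positivity)) hle
    linarith [hmean ▸ hφB]
  subst hAC
  exact ⟨rfl, hφ.injOn hB hA.le (by rw [heq, ← add_mul, hab, one_mul])⟩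

namespace MeasureTheory

variable {X : Type*} [MeasurableSpace X] {ν : Measure X}

lemma lintegral_coe_rpow_ne_zero {p : ℝ} (hp : 0 < p) {g : X → ℝ≥0} (hg : AEMeasurable g ν)
    (h0 : ¬ g =ᵐ[ν] 0) : ∫⁻ x, (g x : ℝ≥0∞) ^ p ∂ν ≠ 0 := by
  rw [Ne, lintegral_eq_zero_iff' (hg.coe_nnreal_ennreal.pow_const p)]
  exact fun h => h0 (h.mono fun x hx => by simpa [hp] using hx)

lemma lintegral_mul_rpow_le {γ : ℝ} (hγ : 0 < γ) {g f : X → ℝ≥0∞} (hg : AEMeasurable g ν)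
    (hf : AEMeasurable f ν) :
    ∫⁻ x, g x * f x ^ γ ∂ν ≤
      (∫⁻ x, g x ^ (1 + γ) ∂ν) ^ (1 / (1 + γ)) * (∫⁻ x, f x ^ (1 + γ) ∂ν) ^ (γ / (1 + γ)) := by
  have hexp : γ * ((1 + γ) / γ) = 1 + γ := by field_simp
  have h := ENNReal.lintegral_mul_le_Lp_mul_Lq ν (Real.holderConjugate_one_add_div hγ) hg
    (hf.pow_const γ)
  simpa only [Pi.mul_apply, ← ENNReal.rpow_mul, hexp, one_div_div] using h

lemma ae_eq_of_lintegral_mul_rpow_eq {γ : ℝ} (hγ : 0 < γ) {g f : X → ℝ≥0}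
    (hg : AEMeasurable g ν) (hf : AEMeasurable f ν)
    (hfin : ∫⁻ x, (g x : ℝ≥0∞) ^ (1 + γ) ∂ν ≠ ∞)
    (hgf : ∫⁻ x, (f x : ℝ≥0∞) ^ (1 + γ) ∂ν = ∫⁻ x, (g x : ℝ≥0∞) ^ (1 + γ) ∂ν)
    (hmul : ∫⁻ x, (g x : ℝ≥0∞) * (f x : ℝ≥0∞) ^ γ ∂ν = ∫⁻ x, (g x : ℝ≥0∞) ^ (1 + γ) ∂ν) :
    g =ᵐ[ν] f := by
  have hpq := Real.holderConjugate_one_add_div hγ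
  have hexp : γ * ((1 + γ) / γ) = 1 + γ := by field_simp
  have hg' := hg.coe_nnreal_ennreal
  have hf' := hf.coe_nnreal_ennreal
  set young : X → ℝ≥0∞ := fun x => (g x : ℝ≥0∞) ^ (1 + γ) / ENNReal.ofReal (1 + γ)
    + ((f x : ℝ≥0∞) ^ γ) ^ ((1 + γ) / γ) / ENNReal.ofReal ((1 + γ) / γ)
  have hyoung : ∫⁻ x, young x ∂ν = ∫⁻ x, (g x : ℝ≥0∞) ^ (1 + γ) ∂ν := by
    simp_rw [young, ← ENNReal.rpow_mul, hexp, ENNReal.div_eq_inv_mul]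
    rw [lintegral_add_left' ((hg'.pow_const _).const_mul _), lintegral_const_mul'' _
      (hg'.pow_const _), lintegral_const_mul'' _ (hf'.pow_const _), hgf, ← add_mul,
      hpq.ennrealOfReal.inv_add_inv_eq_one, one_mul]
  have hae : (fun x => (g x : ℝ≥0∞) * (f x : ℝ≥0∞) ^ γ) =ᵐ[ν] young :=
    ae_eq_of_ae_le_of_lintegral_le (ae_of_all _ fun x => ENNReal.young_inequality _ _ hpq)
      (hmul ▸ hfin) (by fun_prop) (by rw [hyoung, hmul])
  filter_upwards [hae] with x hx
  rw [ENNReal.young_inequality_eq_iff _ _ hpq, ← ENNReal.rpow_mul, hexp] at hx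
  simpa [hγ.not_gt, (ENNReal.rpow_left_injective (by linarith : 1 + γ ≠ 0)).eq_iff] using hx

lemma lintegral_coe_mul_rpow_eq_of_ae_eq {γ : ℝ} (hγ : 0 < γ) {g f : X → ℝ≥0}
    (h : g =ᵐ[ν] f) :
    ∫⁻ x, (g x : ℝ≥0∞) * (f x : ℝ≥0∞) ^ γ ∂ν = ∫⁻ x, (f x : ℝ≥0∞) ^ (1 + γ) ∂ν := by
  refine lintegral_congr_ae (h.mono fun x hx => ?_)
  dsimp only
  rw [hx, ← ENNReal.coe_rpow_of_nonneg _ hγ.le, ← ENNReal.coe_rpow_of_nonneg _ (by linarith),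
    ← ENNReal.coe_mul, NNReal.rpow_one_add' (by linarith)]

end MeasureTheory

lemma FDPD_eq_zero_iff_apply_eq_weighted {X : Type*} [MeasurableSpace X] (ν : Measure X)
    (φ : ℝ → ℝ) {γ : ℝ} (hγ : 0 < γ) (g f : X → ℝ≥0) :
    FDPD ν φ γ g f = 0 ↔
      φ (∫⁻ x, (g x : ℝ≥0∞) * (f x : ℝ≥0∞) ^ γ ∂ν).toReal =
        1 / (1 + γ) * φ (∫⁻ x, (g x : ℝ≥0∞) ^ (1 + γ) ∂ν).toReal +
          γ / (1 + γ) * φ (∫⁻ x, (f x : ℝ≥0∞) ^ (1 + γ) ∂ν).toReal := by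
  unfold FDPD
  constructor <;> intro h <;> field_simp at h ⊢ <;> linarith

theorem fdpd_eq_zero_iff {X : Type*} [MeasurableSpace X] (ν : Measure X) (γ : ℝ) (hγ : 0 < γ)
    (φ : ℝ → ℝ) (hφ : StrictMonoOn φ (Set.Ici (0 : ℝ)))
    (hψ : StrictConvexOn ℝ Set.univ (fun z : ℝ => φ (Real.exp z)))
    (g f : X → NNReal) (hg : MemF ν γ g) (hf : MemF ν γ f) :
    FDPD ν φ γ g f = 0 ↔ g =ᵐ[ν] f := by
  obtain ⟨hgm, hg0, hgA⟩ := hg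
  obtain ⟨hfm, hf0, hfC⟩ := hf
  rw [FDPD_eq_zero_iff_apply_eq_weighted ν φ hγ]
  set A := ∫⁻ x, (g x : ℝ≥0∞) ^ (1 + γ) ∂ν
  set B := ∫⁻ x, (g x : ℝ≥0∞) * (f x : ℝ≥0∞) ^ γ ∂ν
  set C := ∫⁻ x, (f x : ℝ≥0∞) ^ (1 + γ) ∂ν
  have hweights : 1 / (1 + γ) + γ / (1 + γ) = 1 := by field_simp
  constructor
  · intro h
    have hholder : B ≤ A ^ (1 / (1 + γ)) * C ^ (γ / (1 + γ)) :=
      lintegral_mul_rpow_le hγ hgm.coe_nnreal_ennreal.aemeasurable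
        hfm.coe_nnreal_ennreal.aemeasurable
    have hA : 0 < A.toReal :=
      ENNReal.toReal_pos (lintegral_coe_rpow_ne_zero (by linarith) hgm.aemeasurable hg0) hgA
    have hC : 0 < C.toReal :=
      ENNReal.toReal_pos (lintegral_coe_rpow_ne_zero (by linarith) hfm.aemeasurable hf0) hfC
    have hholder' : B.toReal ≤ A.toReal ^ (1 / (1 + γ)) * C.toReal ^ (γ / (1 + γ)) := by
      simpa [ENNReal.toReal_mul, ENNReal.toReal_rpow] using
        ENNReal.toReal_mono (by finiteness) hholder
    obtain ⟨hAC, hBA⟩ := eq_of_apply_eq_weighted_of_le_geom_mean hφ hψ (by positivity)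
      (by positivity) hweights hA hC ENNReal.toReal_nonneg hholder' h
    exact ae_eq_of_lintegral_mul_rpow_eq hγ hgm.aemeasurable hfm.aemeasurable hgA
      ((ENNReal.toReal_eq_toReal_iff' hfC hgA).1 hAC.symm)
      ((ENNReal.toReal_eq_toReal_iff' (ne_top_of_le_ne_top (by finiteness) hholder) hgA).1 hBA)
  · intro h
    have hAC : A = C := lintegral_congr_ae (h.mono fun x hx => by simp only [hx])
    have hBC : B = C := lintegral_coe_mul_rpow_eq_of_ae_eq hγ h
    rw [hAC, hBC, ← add_mul, hweights, one_mul]
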